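/- The ratio of the multiplicative degree-Kirchhoff index of G_n to its Gutman index tends to 1/6 as n → ∞; that is, the sequence ((25n³ + 100n² − 25n)/12) / Gut(G_n), where (25n³ + 100n² − 25n)/12 is the multiplicative degree-Kirchhoff index of G_n and Gut(G_n) is its Gutman index, converges to 1/6 as n → ∞. -/

import Mathlib

/-!
`G_n` is 5-regular, so its Gutman index is 25 times its Wiener index. Distances in `G_n` are
read off the cycle: for `i ≠ j` the distance from `(i, a)` to `(j, b)` is the circular distance
from `i` to `j` in `ZMod n` (each edge moves the first coordinate by at most one step, and the
rungs let a shortest path end in either row), while `(i, 0)` and `(i, 1)` are adjacent. Since the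
circular distances from a point sum to `⌊n²/4⌋`, every vertex has distance sum `2⌊n²/4⌋ + 1`, and
`Gut(G_n) = 25 n (2⌊n²/4⌋ + 1) ~ 25 n³ / 2`, while the degree-Kirchhoff index is `~ 25 n³ / 12`.
-/

/-- The Gutman index of a graph: half the sum of `deg(u)·deg(v)·d(u,v)` over all ordered pairs
`(u,v)` of vertices, where `deg(u)` is the number of neighbours of `u` (a finite sum for a
finite graph, expressed with `finsum`/`ncard` so that it is defined for every `n`). -/
noncomputable def gutmanIndex {V : Type*} (G : SimpleGraph V) : ℕ :=
  (∑ᶠ u : V, ∑ᶠ v : V,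
    (G.neighborSet u).ncard * (G.neighborSet v).ncard * G.dist u v) / 2

/-- The graph `G_n = P₂ ⊠ C_n`: vertex set `(ZMod n) × Fin 2`, where two distinct vertices
`(i,a)` and `(j,b)` are adjacent iff `i = j` or `i = j + 1` or `j = i + 1` in `ZMod n`. -/
def Gn (n : ℕ) : SimpleGraph (ZMod n × Fin 2) where
  Adj x y := x ≠ y ∧ (x.1 = y.1 ∨ x.1 = y.1 + 1 ∨ y.1 = x.1 + 1)
  symm := by
    constructor
    rintro x y ⟨hne, h | h | h⟩
    · exact ⟨hne.symm, Or.inl h.symm⟩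
    · exact ⟨hne.symm, Or.inr (Or.inr h)⟩
    · exact ⟨hne.symm, Or.inr (Or.inl h)⟩
  loopless := by constructor; rintro x ⟨hne, -⟩; exact hne rfl

instance (n : ℕ) : DecidableRel (Gn n).Adj :=
  fun _ _ => inferInstanceAs (Decidable (_ ∧ _))

open SimpleGraph Filter Topology

theorem gutmanIndex_eq_of_isRegularOfDegree {V : Type*} [Fintype V] {G : SimpleGraph V}
    [G.LocallyFinite] {k : ℕ} (hG : G.IsRegularOfDegree k) :
    gutmanIndex G = k ^ 2 * (∑ u, ∑ v, G.dist u v) / 2 := by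
  have hdeg (v : V) : (G.neighborSet v).ncard = k := by
    rw [Set.ncard_eq_toFinset_card', ← hG v]; rfl
  simp only [gutmanIndex, finsum_eq_sum_of_fintype, hdeg, Finset.mul_sum]
  ring_nf

theorem Nat.sum_range_min_sub (m : ℕ) : ∑ k ∈ Finset.range m, min k (m - k) = m ^ 2 / 4 := by
  have hstep (m : ℕ) : ∑ k ∈ Finset.range (m + 2), min k (m + 2 - k)
      = ∑ k ∈ Finset.range (m + 1), min k (m - k) + (m + 1) := by
    have hshift : ∀ k ∈ Finset.range (m + 1),
        min (k + 1) (m + 2 - (k + 1)) = min k (m - k) + 1 := by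
      intro k hk
      have := Finset.mem_range.mp hk
      omega
    rw [Finset.sum_range_succ', Finset.sum_congr rfl hshift, Finset.sum_add_distrib]
    simp
  induction m using Nat.twoStepInduction with
  | zero => simp
  | one => simp
  | more m ih _ =>
    rw [hstep, Finset.sum_range_succ, ih]
    have := Nat.div_add_mod (m ^ 2) 4
    have : (m + 2) ^ 2 = m ^ 2 + 4 * m + 4 := by ring
    omega

namespace ZMod

variable {n : ℕ}

def circDist (i j : ZMod n) : ℕ := (j - i).valMinAbs.natAbs

@[simp]
theorem circDist_self (i : ZMod n) : circDist i i = 0 := by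
  simp [circDist]

theorem circDist_triangle (i j k : ZMod n) : circDist i k ≤ circDist i j + circDist j k := by
  have h := natAbs_valMinAbs_add_le (j - i) (k - j)
  rw [sub_add_sub_cancel'] at h
  exact h.trans (Int.natAbs_add_le _ _)

theorem natAbs_valMinAbs_one_le : (1 : ZMod n).valMinAbs.natAbs ≤ 1 := by
  rcases n with _ | n
  · rfl
  · rw [valMinAbs_natAbs_eq_min]
    exact (min_le_left _ _).trans ((val_one_eq_one_mod _).trans_le (Nat.mod_le _ _))

theorem sum_circDist [NeZero n] (i : ZMod n) : ∑ j, circDist i j = n ^ 2 / 4 := by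
  rw [← Nat.sum_range_min_sub,
    Fintype.sum_equiv (Equiv.subRight i) (circDist i) (fun x => x.valMinAbs.natAbs) (fun _ => rfl)]
  obtain ⟨m, rfl⟩ : ∃ m, n = m + 1 := Nat.exists_eq_succ_of_ne_zero (NeZero.ne n)
  simp only [valMinAbs_natAbs_eq_min]
  exact Fin.sum_univ_eq_sum_range (fun k => min k (m + 1 - k)) (m + 1)

end ZMod

open ZMod

namespace Gn

variable {n : ℕ}

theorem circDist_le_one_of_adj {x y : ZMod n × Fin 2} (h : (Gn n).Adj x y) :
    circDist x.1 y.1 ≤ 1 := by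
  rcases h.2 with h | h | h
  · simp [h]
  · rw [circDist, h, sub_add_cancel_left, natAbs_valMinAbs_neg]
    exact natAbs_valMinAbs_one_le
  · rw [circDist, h, add_sub_cancel_left]
    exact natAbs_valMinAbs_one_le

theorem circDist_le_length {u v : ZMod n × Fin 2} (p : (Gn n).Walk u v) :
    circDist u.1 v.1 ≤ p.length := by
  induction p with
  | nil => simp
  | @cons u v w h q ih =>
    rw [Walk.length_cons]
    exact (circDist_triangle u.1 v.1 w.1).trans (by have := circDist_le_one_of_adj h; omega)

theorem dist_eq_one (i : ZMod n) {a b : Fin 2} (hab : a ≠ b) : (Gn n).dist (i, a) (i, b) = 1 :=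
  dist_eq_one_iff_adj.mpr ⟨by simp [hab], Or.inl rfl⟩

section Nontrivial

variable [Fact (1 < n)]

theorem adj_add_one (i : ZMod n) (a b : Fin 2) : (Gn n).Adj (i, a) (i + 1, b) :=
  ⟨by simp [Prod.ext_iff], Or.inr (Or.inr rfl)⟩

theorem exists_walk_add_natCast (i : ZMod n) (a b : Fin 2) {m : ℕ} (hm : 1 ≤ m) :
    ∃ p : (Gn n).Walk (i, a) (i + (m : ZMod n), b), p.length = m := by
  induction m, hm using Nat.le_induction with
  | base => exact ⟨Walk.cons (by simpa using adj_add_one i a b) .nil, rfl⟩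
  | succ m _ ih =>
    obtain ⟨p, hp⟩ := ih
    exact ⟨p.concat (by simpa [add_assoc] using adj_add_one (i + (m : ZMod n)) b b), by simp [hp]⟩

theorem exists_walk_length_eq_val_sub {i j : ZMod n} (hij : i ≠ j) (a b : Fin 2) :
    ∃ p : (Gn n).Walk (i, a) (j, b), p.length = (j - i).val := by
  have hm : 1 ≤ (j - i).val := Nat.one_le_iff_ne_zero.mpr (by simpa [sub_eq_zero] using hij.symm)
  obtain ⟨p, hp⟩ := exists_walk_add_natCast i a b hm
  exact ⟨p.copy rfl (by rw [natCast_zmod_val, add_sub_cancel]), by rwa [Walk.length_copy]⟩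

theorem dist_eq_circDist {i j : ZMod n} (hij : i ≠ j) (a b : Fin 2) :
    (Gn n).dist (i, a) (j, b) = circDist i j := by
  obtain ⟨p, hp⟩ := exists_walk_length_eq_val_sub hij a b
  obtain ⟨q, hq⟩ := exists_walk_length_eq_val_sub hij.symm b a
  apply le_antisymm
  · have hneg : (i - j).val = n - (j - i).val := by
      rw [← neg_sub, neg_val, if_neg (sub_ne_zero.mpr hij.symm)]
    rw [circDist, valMinAbs_natAbs_eq_min, ← hneg, ← hp, ← hq]
    exact le_min (dist_le p) (dist_comm.trans_le (dist_le q))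
  · obtain ⟨r, hr⟩ := p.reachable.exists_walk_length_eq_dist
    exact hr ▸ circDist_le_length r

theorem sum_dist (u : ZMod n × Fin 2) :
    ∑ v, (Gn n).dist u v = 2 * ∑ j, circDist u.1 j + 1 := by
  obtain ⟨i, a⟩ := u
  have hcol (j : ZMod n) :
      ∑ b, (Gn n).dist (i, a) (j, b) = 2 * circDist i j + if j = i then 1 else 0 := by
    by_cases hj : j = i
    · subst hj
      fin_cases a <;> simp [dist_eq_one]
    · simp [dist_eq_circDist (Ne.symm hj), hj, two_mul]
  simp only [Fintype.sum_prod_type, hcol, Finset.sum_add_distrib, Finset.sum_ite_eq',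
    Finset.mem_univ, if_true, Finset.mul_sum]

end Nontrivial

section Finite

variable [NeZero n]

theorem neighborFinset_eq (u : ZMod n × Fin 2) :
    (Gn n).neighborFinset u = (({u.1 - 1, u.1, u.1 + 1} : Finset (ZMod n)) ×ˢ .univ).erase u := by
  ext v
  simp only [mem_neighborFinset, Finset.mem_erase, Finset.mem_product, Finset.mem_insert,
    Finset.mem_singleton, Finset.mem_univ, and_true, eq_sub_iff_add_eq]
  constructor <;> rintro ⟨hne, h | h | h⟩ <;> exact ⟨hne.symm, by simp [h]⟩

theorem isRegularOfDegree (hn : 3 ≤ n) : (Gn n).IsRegularOfDegree 5 := by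
  have : Fact (1 < n) := ⟨by omega⟩
  have h1 : (1 : ZMod n) ≠ 0 := one_ne_zero
  have h2 : (2 : ZMod n) ≠ 0 := by
    have : ((2 : ℕ) : ZMod n) ≠ 0 := by
      rw [Ne, ZMod.natCast_eq_zero_iff]
      exact Nat.not_dvd_of_pos_of_lt (by norm_num) (by omega)
    exact_mod_cast this
  intro u
  have hcol : ({u.1 - 1, u.1, u.1 + 1} : Finset (ZMod n)).card = 3 := by
    refine Finset.card_eq_three.mpr ⟨_, _, _, fun h => h1 ?_, fun h => h2 ?_, fun h => h1 ?_, rfl⟩ <;>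
      linear_combination -h
  rw [degree, neighborFinset_eq, Finset.card_erase_of_mem (by simp), Finset.card_product, hcol]
  rfl

end Finite

theorem gutmanIndex_eq (hn : 3 ≤ n) : gutmanIndex (Gn n) = 25 * n * (2 * (n ^ 2 / 4) + 1) := by
  have : Fact (1 < n) := ⟨by omega⟩
  rw [gutmanIndex_eq_of_isRegularOfDegree (isRegularOfDegree hn)]
  simp only [sum_dist, sum_circDist, Finset.sum_const, Finset.card_univ, Fintype.card_prod,
    ZMod.card, Fintype.card_fin, smul_eq_mul]
  rw [show 5 ^ 2 * (n * 2 * (2 * (n ^ 2 / 4) + 1)) = 25 * n * (2 * (n ^ 2 / 4) + 1) * 2 by ring]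
  exact Nat.mul_div_cancel _ two_pos

end Gn

theorem tendsto_natCast_sq_div_four_div_sq :
    Tendsto (fun n : ℕ => ((n ^ 2 / 4 : ℕ) : ℝ) / n ^ 2) atTop (𝓝 (1 / 4)) := by
  have hsq : Tendsto (fun n : ℕ => (n : ℝ) ^ 2 / 4) atTop atTop :=
    ((tendsto_pow_atTop two_ne_zero).comp tendsto_natCast_atTop_atTop).atTop_div_const
      (by norm_num)
  have h := ((tendsto_nat_floor_div_atTop (R := ℝ)).comp hsq).mul_const (1 / 4)
  rw [one_mul] at h
  refine h.congr fun n => ?_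
  have hfloor : ⌊(n : ℝ) ^ 2 / 4⌋₊ = n ^ 2 / 4 := by
    exact_mod_cast Nat.floor_div_eq_div (n ^ 2) 4
  simp only [Function.comp_apply, hfloor]
  ring

theorem tendsto_gutmanIndex_Gn_div_cube :
    Tendsto (fun n : ℕ => (gutmanIndex (Gn n) : ℝ) / n ^ 3) atTop (𝓝 (25 / 2)) := by
  have h := (((tendsto_inv_atTop_nhds_zero_nat (𝕜 := ℝ)).pow 2).add
    (tendsto_natCast_sq_div_four_div_sq.const_mul 2)).const_mul 25
  rw [show (25 : ℝ) * ((0 : ℝ) ^ 2 + 2 * (1 / 4)) = 25 / 2 by norm_num] at h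
  refine h.congr' ?_
  filter_upwards [eventually_ge_atTop 3] with n hn
  have : (n : ℝ) ≠ 0 := by positivity
  rw [Gn.gutmanIndex_eq hn]
  push_cast
  field_simp
  ring

/-- The ratio of the multiplicative degree-Kirchhoff index
`(25n³ + 100n² − 25n)/12` of `G_n = P₂ ⊠ C_n` to its Gutman index `Gut(G_n)` converges to
`1/6` as `n → ∞`. -/
theorem mulDegKirchhoff_div_gutman_tendsto :
    Filter.Tendsto
      (fun n : ℕ =>
        ((25 * (n : ℝ) ^ 3 + 100 * n ^ 2 - 25 * n) / 12) / (gutmanIndex (Gn n) : ℝ))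
      Filter.atTop (nhds (1 / 6)) := by
  have hinv := tendsto_inv_atTop_nhds_zero_nat (𝕜 := ℝ)
  have hnum : Tendsto (fun n : ℕ => ((25 * (n : ℝ) ^ 3 + 100 * n ^ 2 - 25 * n) / 12) / n ^ 3)
      atTop (𝓝 (25 / 12)) := by
    have h := ((tendsto_const_nhds (x := (25 / 12 : ℝ))).add (hinv.const_mul (25 / 3))).sub
      ((hinv.pow 2).const_mul (25 / 12))
    rw [show (25 / 12 : ℝ) + 25 / 3 * 0 - 25 / 12 * 0 ^ 2 = 25 / 12 by norm_num] at h
    refine h.congr' ?_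
    filter_upwards [eventually_ne_atTop 0] with n hn
    field_simp
    ring
  have h := hnum.div tendsto_gutmanIndex_Gn_div_cube (by norm_num)
  rw [show (25 / 12 : ℝ) / (25 / 2) = 1 / 6 by norm_num] at h
  refine h.congr' ?_
  filter_upwards [eventually_ne_atTop 0] with n hn
  exact div_div_div_cancel_right₀ (by positivity) _ _
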